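/- arXiv:2305.13747 — 3 statements merged into one kernel-verified Lean document; each statement's English description precedes it below -/
import Mathlib

section
/- Under the assumptions of the one-step policy improvement setting, if the modified policy's action differs from the base policy's action at state s, i.e., π_mod(s) ≠ π_base(s), then the inequality is strict: Q_{π_base}(s, π_mod(s)) > V_{π_base}(s). -/
theorem lt_of_convexCombination_le_of_lt {α x y u v : ℝ} (hα0 : 0 ≤ α) (hα1 : α < 1)
    (hyx : y < x) (h : (1 - α) * x + α * u ≤ (1 - α) * y + α * v) : u < v := by
  nlinarith

theorem stmt_1_general
    {S A : Type*} [Fintype S]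
    (P : S → A → S → ℝ) (r : S → A → ℝ) (γ : ℝ)
    (f : S → A → ℝ) (hf : ∀ s, Function.Injective (f s))
    (α : ℝ) (hα0 : 0 < α) (hα1 : α < 1)
    (πbase πmod : S → A)
    (Vbase : S → ℝ)
    (hVbase : ∀ s, Vbase s = r s (πbase s) + γ * ∑ s' : S, P s (πbase s) s' * Vbase s')
    (Qbase : S → A → ℝ)
    (hQbase : ∀ s a, Qbase s a = r s a + γ * ∑ s' : S, P s a s' * Vbase s')
    (hbase : ∀ s a, f s a ≤ f s (πbase s))
    (hmod : ∀ s a, (1 - α) * f s a + α * Qbase s a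
        ≤ (1 - α) * f s (πmod s) + α * Qbase s (πmod s))
    (s : S) (hne : πmod s ≠ πbase s) :
    Qbase s (πmod s) > Vbase s := by
  have hQV : Qbase s (πbase s) = Vbase s := by rw [hQbase, hVbase]
  have hf_lt : f s (πmod s) < f s (πbase s) :=
    (hbase s (πmod s)).lt_of_ne fun h => hne (hf s h)
  rw [← hQV]
  exact lt_of_convexCombination_le_of_lt hα0.le hα1 hf_lt (hmod s (πbase s))

theorem stmt_1
    {S A : Type*} [Fintype S] [Fintype A] [Nonempty A]
    (P : S → A → S → ℝ) (r : S → A → ℝ) (γ : ℝ) (hγ0 : 0 ≤ γ) (hγ1 : γ < 1)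
    (f : S → A → ℝ) (hf : ∀ s, Function.Injective (f s))
    (α : ℝ) (hα0 : 0 < α) (hα1 : α < 1)
    (πbase πmod : S → A)
    (Vbase : S → ℝ)
    (hVbase : ∀ s, Vbase s = r s (πbase s) + γ * ∑ s' : S, P s (πbase s) s' * Vbase s')
    (Qbase : S → A → ℝ)
    (hQbase : ∀ s a, Qbase s a = r s a + γ * ∑ s' : S, P s a s' * Vbase s')
    (hbase : ∀ s a, f s a ≤ f s (πbase s))
    (hmod : ∀ s a, (1 - α) * f s a + α * Qbase s a
        ≤ (1 - α) * f s (πmod s) + α * Qbase s (πmod s))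
    (s : S) (hne : πmod s ≠ πbase s) :
    Qbase s (πmod s) > Vbase s :=
  stmt_1_general P r γ f hf α hα0 hα1 πbase πmod Vbase hVbase Qbase hQbase hbase hmod s hne
end

section
/- Main policy improvement theorem: let π_base(s) = argmax_a f(s,a) with f(s,·) injective for each s, and π_mod(s) = argmax_a [(1-α) f(s,a) + α Q_{π_base}(s,a)] for fixed α ∈ (0,1). Then V_{π_mod}(s) ≥ V_{π_base}(s) for every state s of the finite discounted MDP. -/
/-!
Choosing `πbase s` in the mixed objective, and using that `πbase` maximizes `f s`, shows that
`πmod` is greedy-improving for `Qbase`: `Vbase s = Qbase s (πbase s) ≤ Qbase s (πmod s)`. Thus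
`Vbase` is a subsolution of the Bellman equation of `πmod`, whose solution is `Vmod`, and the
comparison principle for a `γ`-contraction with a stochastic kernel gives `Vbase ≤ Vmod`.
-/

open Finset

section Comparison

variable {S : Type*} [Fintype S] (K : S → S → ℝ) {γ : ℝ}

/-- Evaluate at a minimizer of `d`: there `γ * d s₀ ≤ γ * ∑ K s₀ s' d s' ≤ d s₀`. -/
theorem nonneg_of_discounted_expectation_le (hKnn : ∀ s s', 0 ≤ K s s')
    (hKsum : ∀ s, ∑ s', K s s' = 1) (hγ0 : 0 ≤ γ) (hγ1 : γ < 1) {d : S → ℝ}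
    (hd : ∀ s, γ * ∑ s', K s s' * d s' ≤ d s) (s : S) : 0 ≤ d s := by
  have : Nonempty S := ⟨s⟩
  obtain ⟨s₀, hs₀⟩ := Finite.exists_min d
  suffices 0 ≤ d s₀ from this.trans (hs₀ s)
  have hmean : d s₀ ≤ ∑ s', K s₀ s' * d s' :=
    calc d s₀ = ∑ s', K s₀ s' * d s₀ := by rw [← sum_mul, hKsum, one_mul]
      _ ≤ ∑ s', K s₀ s' * d s' :=
        sum_le_sum fun s' _ => mul_le_mul_of_nonneg_left (hs₀ s') (hKnn s₀ s')
  nlinarith [hd s₀, mul_le_mul_of_nonneg_left hmean hγ0]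

theorem le_of_sub_bellman_of_super_bellman (hKnn : ∀ s s', 0 ≤ K s s')
    (hKsum : ∀ s, ∑ s', K s s' = 1) (hγ0 : 0 ≤ γ) (hγ1 : γ < 1) {c V W : S → ℝ}
    (hV : ∀ s, V s ≤ c s + γ * ∑ s', K s s' * V s')
    (hW : ∀ s, c s + γ * ∑ s', K s s' * W s' ≤ W s) (s : S) : V s ≤ W s := by
  have hsub : ∀ s, γ * ∑ s', K s s' * (W s' - V s') ≤ W s - V s := fun s => by
    simp only [mul_sub, sum_sub_distrib]
    linarith [hV s, hW s]
  exact sub_nonneg.mp (nonneg_of_discounted_expectation_le K hKnn hKsum hγ0 hγ1 hsub s)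

end Comparison

theorem le_of_mix_le_mix {α x x' q q' : ℝ} (hα0 : 0 < α) (hα1 : α ≤ 1) (hx : x' ≤ x)
    (h : (1 - α) * x + α * q ≤ (1 - α) * x' + α * q') : q ≤ q' := by
  nlinarith

theorem stmt_7_general
    {S A : Type*} [Fintype S]
    (P : S → A → S → ℝ) (r : S → A → ℝ) (γ : ℝ) (hγ0 : 0 ≤ γ) (hγ1 : γ < 1)
    (hPnn : ∀ s a s', 0 ≤ P s a s') (hPsum : ∀ s a, ∑ s' : S, P s a s' = 1)
    (f : S → A → ℝ)
    (α : ℝ) (hα0 : 0 < α) (hα1 : α < 1)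
    (πbase πmod : S → A)
    (Vbase : S → ℝ)
    (hVbase : ∀ s, Vbase s = r s (πbase s) + γ * ∑ s' : S, P s (πbase s) s' * Vbase s')
    (Qbase : S → A → ℝ)
    (hQbase : ∀ s a, Qbase s a = r s a + γ * ∑ s' : S, P s a s' * Vbase s')
    (hbase : ∀ s a, f s a ≤ f s (πbase s))
    (hmod : ∀ s a, (1 - α) * f s a + α * Qbase s a
        ≤ (1 - α) * f s (πmod s) + α * Qbase s (πmod s))
    (Vmod : S → ℝ)
    (hVmod : ∀ s, Vmod s = r s (πmod s) + γ * ∑ s' : S, P s (πmod s) s' * Vmod s') :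
    ∀ s, Vmod s ≥ Vbase s := by
  have hgreedy : ∀ s, Vbase s ≤ r s (πmod s) + γ * ∑ s', P s (πmod s) s' * Vbase s' := fun s =>
    calc Vbase s = Qbase s (πbase s) := (hVbase s).trans (hQbase s _).symm
      _ ≤ Qbase s (πmod s) := le_of_mix_le_mix hα0 hα1.le (hbase s _) (hmod s (πbase s))
      _ = _ := hQbase s _
  exact le_of_sub_bellman_of_super_bellman (fun s => P s (πmod s)) (fun s => hPnn s _)
    (fun s => hPsum s _) hγ0 hγ1 hgreedy (fun s => (hVmod s).ge)

theorem stmt_7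
    {S A : Type*} [Fintype S] [Fintype A] [Nonempty A]
    (P : S → A → S → ℝ) (r : S → A → ℝ) (γ : ℝ) (hγ0 : 0 ≤ γ) (hγ1 : γ < 1)
    (hPnn : ∀ s a s', 0 ≤ P s a s') (hPsum : ∀ s a, ∑ s' : S, P s a s' = 1)
    (f : S → A → ℝ) (hf : ∀ s, Function.Injective (f s))
    (α : ℝ) (hα0 : 0 < α) (hα1 : α < 1)
    (πbase πmod : S → A)
    (Vbase : S → ℝ)
    (hVbase : ∀ s, Vbase s = r s (πbase s) + γ * ∑ s' : S, P s (πbase s) s' * Vbase s')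
    (Qbase : S → A → ℝ)
    (hQbase : ∀ s a, Qbase s a = r s a + γ * ∑ s' : S, P s a s' * Vbase s')
    (hbase : ∀ s a, f s a ≤ f s (πbase s))
    (hmod : ∀ s a, (1 - α) * f s a + α * Qbase s a
        ≤ (1 - α) * f s (πmod s) + α * Qbase s (πmod s))
    (Vmod : S → ℝ)
    (hVmod : ∀ s, Vmod s = r s (πmod s) + γ * ∑ s' : S, P s (πmod s) s' * Vmod s') :
    ∀ s, Vmod s ≥ Vbase s :=
  stmt_7_general P r γ hγ0 hγ1 hPnn hPsum f α hα0 hα1 πbase πmod Vbase hVbase Qbase hQbase hbase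
    hmod Vmod hVmod
end

section
/- Greedy policy improvement (classical, full α=1 case): in a finite discounted MDP, let π⁺(s) = argmax_a Q_π(s,a). Then V_{π⁺}(s) ≥ V_π(s) for all states s, and if π⁺ ≠ π on some state where the argmax is strict, V_{π⁺} strictly dominates V_π at that state. -/
/-!
By greediness, `Vπ` is a subsolution of the Bellman equation of `πplus`, whose solution is
`Vplus`. A maximum principle for discounted stochastic kernels (at a state where
`Vπ - Vplus` is largest, the discounted average of that difference cannot keep up with its
maximum unless the maximum is `≤ 0`) turns this into `Vπ ≤ Vplus`. At a state with strict
greedy improvement the first Bellman step is already strict, and monotonicity of the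
averaging carries the strict inequality over to `Vplus`.
-/

open Finset

section

variable {S : Type*} [Fintype S]

theorem sum_mul_le_of_le_of_sum_eq_one {w f : S → ℝ} {M : ℝ} (hw : ∀ s, 0 ≤ w s)
    (hw1 : ∑ s, w s = 1) (hf : ∀ s, f s ≤ M) : ∑ s, w s * f s ≤ M :=
  calc ∑ s, w s * f s ≤ ∑ s, w s * M := by gcongr with s; exacts [hw s, hf s]
    _ = M := by rw [← sum_mul, hw1, one_mul]

theorem nonpos_of_le_discounted_average (K : S → S → ℝ) (hK : ∀ s s', 0 ≤ K s s')
    (hK1 : ∀ s, ∑ s', K s s' = 1) {γ : ℝ} (hγ0 : 0 ≤ γ) (hγ1 : γ < 1) (δ : S → ℝ)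
    (hδ : ∀ s, δ s ≤ γ * ∑ s', K s s' * δ s') (s : S) : δ s ≤ 0 := by
  have : Nonempty S := ⟨s⟩
  obtain ⟨s₀, hs₀⟩ := Finite.exists_max δ
  have hmax : δ s₀ ≤ γ * δ s₀ :=
    (hδ s₀).trans <| mul_le_mul_of_nonneg_left
      (sum_mul_le_of_le_of_sum_eq_one (hK s₀) (hK1 s₀) hs₀) hγ0
  nlinarith [hs₀ s]

theorem le_of_bellman_sub_of_bellman_eq (P : S → S → ℝ) (hP : ∀ s s', 0 ≤ P s s')
    (hP1 : ∀ s, ∑ s', P s s' = 1) (r : S → ℝ) {γ : ℝ} (hγ0 : 0 ≤ γ) (hγ1 : γ < 1)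
    {V W : S → ℝ} (hV : ∀ s, V s ≤ r s + γ * ∑ s', P s s' * V s')
    (hW : ∀ s, W s = r s + γ * ∑ s', P s s' * W s') (s : S) : V s ≤ W s := by
  suffices V s - W s ≤ 0 by linarith
  refine nonpos_of_le_discounted_average P hP hP1 hγ0 hγ1 (fun s => V s - W s) (fun s => ?_) s
  have hsub : ∑ s', P s s' * (V s' - W s') = ∑ s', P s s' * V s' - ∑ s', P s s' * W s' := by
    simp only [mul_sub, sum_sub_distrib]
  rw [hsub]
  linarith [hV s, hW s]

end

theorem stmt_13_general
    {S A : Type*} [Fintype S]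
    (P : S → A → S → ℝ) (r : S → A → ℝ) (γ : ℝ) (hγ0 : 0 ≤ γ) (hγ1 : γ < 1)
    (hPnn : ∀ s a s', 0 ≤ P s a s') (hPsum : ∀ s a, ∑ s' : S, P s a s' = 1)
    (π πplus : S → A)
    (Vπ : S → ℝ)
    (hVπ : ∀ s, Vπ s = r s (π s) + γ * ∑ s' : S, P s (π s) s' * Vπ s')
    (Qπ : S → A → ℝ)
    (hQπ : ∀ s a, Qπ s a = r s a + γ * ∑ s' : S, P s a s' * Vπ s')
    (hplus : ∀ s a, Qπ s a ≤ Qπ s (πplus s))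
    (Vplus : S → ℝ)
    (hVplus : ∀ s, Vplus s = r s (πplus s) + γ * ∑ s' : S, P s (πplus s) s' * Vplus s') :
    (∀ s, Vplus s ≥ Vπ s) ∧ (∀ s, Qπ s (πplus s) > Qπ s (π s) → Vplus s > Vπ s) := by
  have hQπ_self : ∀ s, Qπ s (π s) = Vπ s := fun s => by rw [hQπ, ← hVπ]
  have hsub : ∀ s, Vπ s ≤ Qπ s (πplus s) := fun s => hQπ_self s ▸ hplus s (π s)
  have hle : ∀ s, Vπ s ≤ Vplus s := le_of_bellman_sub_of_bellman_eq (fun s => P s (πplus s))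
    (fun s => hPnn s _) (fun s => hPsum s _) (fun s => r s (πplus s)) hγ0 hγ1
    (fun s => hQπ s _ ▸ hsub s) hVplus
  refine ⟨hle, fun s hs => ?_⟩
  have hQ_le : Qπ s (πplus s) ≤ Vplus s := by
    rw [hQπ, hVplus]
    gcongr with s'
    exacts [hPnn s _ s', hle s']
  rw [hQπ_self] at hs
  exact hs.trans_le hQ_le

theorem stmt_13
    {S A : Type*} [Fintype S] [Fintype A] [Nonempty A]
    (P : S → A → S → ℝ) (r : S → A → ℝ) (γ : ℝ) (hγ0 : 0 ≤ γ) (hγ1 : γ < 1)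
    (hPnn : ∀ s a s', 0 ≤ P s a s') (hPsum : ∀ s a, ∑ s' : S, P s a s' = 1)
    (π πplus : S → A)
    (Vπ : S → ℝ)
    (hVπ : ∀ s, Vπ s = r s (π s) + γ * ∑ s' : S, P s (π s) s' * Vπ s')
    (Qπ : S → A → ℝ)
    (hQπ : ∀ s a, Qπ s a = r s a + γ * ∑ s' : S, P s a s' * Vπ s')
    (hplus : ∀ s a, Qπ s a ≤ Qπ s (πplus s))
    (Vplus : S → ℝ)
    (hVplus : ∀ s, Vplus s = r s (πplus s) + γ * ∑ s' : S, P s (πplus s) s' * Vplus s') :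
    (∀ s, Vplus s ≥ Vπ s) ∧ (∀ s, Qπ s (πplus s) > Qπ s (π s) → Vplus s > Vπ s) :=
  stmt_13_general P r γ hγ0 hγ1 hPnn hPsum π πplus Vπ hVπ Qπ hQπ hplus Vplus hVplus
end
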